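/- Let g ≥ 1 and let (a_1,…,a_k; b_1,…,b_ℓ) be a partial symplectic basis of ℤ^{2g}; set α_i = r(a_i) and β_j = r(b_j). Then the reduction homomorphism from {M ∈ Sp_{2g}(ℤ) : M a_i = a_i and M b_j = b_j for all 1 ≤ i ≤ k, 1 ≤ j ≤ ℓ} to {N ∈ Sp_{2g}(ℤ/2) : N α_i = α_i and N β_j = β_j for all 1 ≤ i ≤ k, 1 ≤ j ≤ ℓ} is surjective. -/

import Mathlib

open scoped BigOperators

/-- The free module `R^{2g}`. -/
abbrev SV (g : ℕ) (R : Type) [CommRing R] : Type := Fin (2*g) → R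

/-- The standard symplectic form on `R^{2g}`. -/
def symplForm (g : ℕ) (R : Type) [CommRing R] (v w : SV g R) : R :=
  ∑ i : Fin g,
    (v ⟨i.1, by have := i.isLt; omega⟩ * w ⟨g + i.1, by have := i.isLt; omega⟩ -
      v ⟨g + i.1, by have := i.isLt; omega⟩ * w ⟨i.1, by have := i.isLt; omega⟩)

/-- `(a; b)` is a symplectic basis of `R^{2g}`. -/
def IsSymplBasis (g : ℕ) (R : Type) [CommRing R] (a b : Fin g → SV g R) : Prop :=
  (∃ B : Module.Basis (Fin g ⊕ Fin g) R (SV g R),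
      (∀ i, B (Sum.inl i) = a i) ∧ (∀ i, B (Sum.inr i) = b i)) ∧
  (∀ i j, symplForm g R (a i) (a j) = 0) ∧
  (∀ i j, symplForm g R (b i) (b j) = 0) ∧
  (∀ i j, symplForm g R (a i) (b j) = if i = j then 1 else 0)

/-- `(a_1,…,a_k; b_1,…,b_l)` is a partial symplectic basis of `R^{2g}`:
it extends to a symplectic basis. -/
def IsPartialSymplBasis (g : ℕ) (R : Type) [CommRing R] {k l : ℕ}
    (a : Fin k → SV g R) (b : Fin l → SV g R) : Prop :=
  ∃ (hk : k ≤ g) (hl : l ≤ g) (A B : Fin g → SV g R), IsSymplBasis g R A B ∧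
    (∀ i, A (Fin.castLE hk i) = a i) ∧ (∀ j, B (Fin.castLE hl j) = b j)

/-- The lax vector `⟨v⟩ = {v, -v}`. -/
def lax {α : Type} [Neg α] (v : α) : Set α := {v, -v}

/-- Standard simplices of the complex of lax isotropic bases `B_g(R)`.  (The set of
vertices of a simplex.) -/
def IsStdSimplex (g : ℕ) (R : Type) [CommRing R] (σ : Set (Set (SV g R))) : Prop :=
  ∃ (k : ℕ) (a : Fin k → SV g R),
    IsPartialSymplBasis g R a (fun i : Fin 0 => i.elim0) ∧
    σ = Set.range fun i => lax (a i)

/-- Simplices of intersection type of the augmented complex `B̂_g(R)`. -/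
def IsIntSimplex (g : ℕ) (R : Type) [CommRing R] (σ : Set (Set (SV g R))) : Prop :=
  ∃ (k : ℕ) (a : Fin k → SV g R) (b : SV g R), 1 ≤ k ∧
    IsPartialSymplBasis g R a (fun _ : Fin 1 => b) ∧
    σ = insert (lax b) (Set.range fun i => lax (a i))

/-- Simplices of additive type of the augmented complex `B̂_g(R)`. -/
def IsAddSimplex (g : ℕ) (R : Type) [CommRing R] (σ : Set (Set (SV g R))) : Prop :=
  ∃ (k m : ℕ) (a : Fin k → SV g R) (ε : Fin k → R), (m = 2 ∨ m = 3) ∧ m ≤ k ∧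
    (∀ i, ε i = 1 ∨ ε i = -1) ∧
    IsPartialSymplBasis g R a (fun i : Fin 0 => i.elim0) ∧
    σ = insert (lax (∑ i : Fin k, if (i : ℕ) < m then ε i • a i else 0))
        (Set.range fun i => lax (a i))

/-- Simplices of the augmented complex of lax isotropic bases `B̂_g(R)`. -/
def IsHatSimplex (g : ℕ) (R : Type) [CommRing R] (σ : Set (Set (SV g R))) : Prop :=
  IsStdSimplex g R σ ∨ IsIntSimplex g R σ ∨ IsAddSimplex g R σ

/-- Coordinatewise reduction `ℤ^{2g} → (ℤ/2)^{2g}`. -/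
def rMap (g : ℕ) (v : SV g ℤ) : SV g (ZMod 2) := fun i => ((v i : ℤ) : ZMod 2)

/-- The reduction map on simplices, sending each lax vector `⟨v⟩` (as a set) to its image. -/
def rSimp (g : ℕ) (σ : Set (Set (SV g ℤ))) : Set (Set (SV g (ZMod 2))) :=
  (fun s => rMap g '' s) '' σ

/-- The group of `R`-linear automorphisms of `R^{2g}`. -/
abbrev SAut (g : ℕ) (R : Type) [CommRing R] : Type := (SV g R) ≃ₗ[R] (SV g R)

/-- The symplectic group `Sp_{2g}(R)`, as the subgroup of linear automorphisms of
`R^{2g}` preserving the standard symplectic form. -/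
def Sp (g : ℕ) (R : Type) [CommRing R] : Subgroup (SAut g R) where
  carrier := {M | ∀ v w, symplForm g R (M v) (M w) = symplForm g R v w}
  one_mem' := by intro v w; rfl
  mul_mem' := by
    intro M N hM hN v w
    exact (hM (N v) (N w)).trans (hN v w)
  inv_mem' := by
    intro M hM v w
    have h := hM (M.symm v) (M.symm w)
    simpa using h.symm

/-- The level 2 congruence subgroup `Sp_{2g}(ℤ)[2]`, the kernel of the reduction
`Sp_{2g}(ℤ) → Sp_{2g}(ℤ/2)`: symplectic automorphisms acting trivially mod 2. -/
def SpLevel2 (g : ℕ) : Subgroup (SAut g ℤ) where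
  carrier := {M | M ∈ Sp g ℤ ∧ ∀ v, rMap g (M v) = rMap g v}
  one_mem' := ⟨(Sp g ℤ).one_mem, fun _ => rfl⟩
  mul_mem' := by
    rintro M N ⟨hM, hM2⟩ ⟨hN, hN2⟩
    exact ⟨(Sp g ℤ).mul_mem hM hN, fun v => ((hM2 (N v)).trans (hN2 v) : _)⟩
  inv_mem' := by
    rintro M ⟨hM, hM2⟩
    refine ⟨(Sp g ℤ).inv_mem hM, fun v => ?_⟩
    have := hM2 (M.symm v)
    simp only [LinearEquiv.apply_symm_apply] at this
    exact this.symm ▸ rfl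

/-!
Conjugating by the symplectic automorphism that carries the standard basis `e` of `ℤ^{2g}` to a
symplectic basis extending `(a; b)`, it suffices to lift `N` when it fixes some standard basis
vectors. These are fixed one more at a time: if `N` fixes `e_q` for `q ∈ F` and `p ∉ F`, the
`0/1`-lift `b` of `N e_p` has the same symplectic pairings with every `e_q` as `e_p`, and one or
two transvections `v ↦ v ± ω(v, u) u` with `u` orthogonal to all `e_q` carry `e_p` to `b`.
Dividing `N` by the reduction of their product makes `N` fix `e_p` as well; once every `e_x` is
fixed, `N = 1`.
-/

lemma Sum.swap_ne_self {α : Type*} (x : α ⊕ α) : x.swap ≠ x := by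
  cases x <;> simp

section SymplecticForm

variable {g : ℕ} {R : Type} [CommRing R]

/-- `Sum.inl i ↦ i` and `Sum.inr i ↦ g + i`, so that `symplForm` pairs `x` with `x.swap`. -/
def symplIdx (g : ℕ) : Fin g ⊕ Fin g ≃ Fin (2 * g) :=
  finSumFinEquiv.trans (finCongr (two_mul g).symm)

def symplSign (R : Type) [CommRing R] : Fin g ⊕ Fin g → R := Sum.elim 1 (-1)

local notation "σ" => symplIdx g

lemma symplForm_eq_sum (v w : SV g R) :
    symplForm g R v w = ∑ x, symplSign R x * v (σ x) * w (σ x.swap) := by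
  rw [Fintype.sum_sum_type, ← Finset.sum_add_distrib]
  refine Finset.sum_congr rfl fun i _ => ?_
  simp only [symplSign, Sum.elim_inl, Sum.elim_inr, Sum.swap_inl, Sum.swap_inr, Pi.one_apply,
    Pi.neg_apply]
  change _ = 1 * v ⟨i, _⟩ * w ⟨g + i, _⟩ + -1 * v ⟨g + i, _⟩ * w ⟨i, _⟩
  ring

def symplBilin (g : ℕ) (R : Type) [CommRing R] : LinearMap.BilinForm R (SV g R) :=
  LinearMap.mk₂ R (symplForm g R)
    (fun _ _ _ => by simp only [symplForm_eq_sum, Pi.add_apply, mul_add, add_mul,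
      Finset.sum_add_distrib])
    (fun _ _ _ => by
      simp only [symplForm_eq_sum, Pi.smul_apply, smul_eq_mul, Finset.mul_sum]
      exact Finset.sum_congr rfl fun _ _ => by ring)
    (fun _ _ _ => by simp only [symplForm_eq_sum, Pi.add_apply, mul_add, Finset.sum_add_distrib])
    (fun _ _ _ => by
      simp only [symplForm_eq_sum, Pi.smul_apply, smul_eq_mul, Finset.mul_sum]
      exact Finset.sum_congr rfl fun _ _ => by ring)

@[simp]
lemma symplBilin_apply (v w : SV g R) : symplBilin g R v w = symplForm g R v w := rfl

lemma symplForm_add_left (v v' w : SV g R) :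
    symplForm g R (v + v') w = symplForm g R v w + symplForm g R v' w :=
  (symplBilin g R).map_add₂ v v' w

lemma symplForm_add_right (v w w' : SV g R) :
    symplForm g R v (w + w') = symplForm g R v w + symplForm g R v w' :=
  (symplBilin g R v).map_add w w'

lemma symplForm_sub_right (v w w' : SV g R) :
    symplForm g R v (w - w') = symplForm g R v w - symplForm g R v w' :=
  (symplBilin g R v).map_sub w w'

lemma symplForm_smul_left (c : R) (v w : SV g R) :
    symplForm g R (c • v) w = c * symplForm g R v w :=
  (symplBilin g R).map_smul₂ c v w

lemma symplForm_smul_right (c : R) (v w : SV g R) :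
    symplForm g R v (c • w) = c * symplForm g R v w :=
  (symplBilin g R v).map_smul c w

lemma symplForm_self (v : SV g R) : symplForm g R v v = 0 :=
  Finset.sum_eq_zero fun _ _ => by ring

lemma symplForm_comm (v w : SV g R) : symplForm g R w v = -symplForm g R v w := by
  rw [symplForm, symplForm, ← Finset.sum_neg_distrib]
  exact Finset.sum_congr rfl fun _ _ => by ring

lemma mem_Sp_iff_basis {ι : Type*} (B : Module.Basis ι R (SV g R)) (M : SAut g R) :
    M ∈ Sp g R ↔ ∀ i j, symplForm g R (M (B i)) (M (B j)) = symplForm g R (B i) (B j) := by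
  refine ⟨fun hM i j => hM _ _, fun h v w => ?_⟩
  exact LinearMap.congr_fun₂ (LinearMap.BilinForm.ext_basis
    (B := (symplBilin g R).compl₁₂ M.toLinearMap M.toLinearMap) (F₂ := symplBilin g R) B h)
    v w

noncomputable def stdBasis (g : ℕ) (R : Type) [CommRing R] :
    Module.Basis (Fin g ⊕ Fin g) R (SV g R) :=
  (Pi.basisFun R (Fin (2 * g))).reindex (symplIdx g).symm

lemma stdBasis_apply (x : Fin g ⊕ Fin g) : stdBasis g R x = Pi.single (σ x) 1 := by
  simp [stdBasis]

lemma stdBasis_apply_symplIdx (x y : Fin g ⊕ Fin g) :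
    stdBasis g R x (σ y) = if y = x then 1 else 0 := by
  simp [stdBasis_apply, Pi.single_apply]

lemma isUnit_symplSign (x : Fin g ⊕ Fin g) : IsUnit (symplSign R x) := by
  cases x <;> simp [symplSign]

lemma symplForm_stdBasis_left (x : Fin g ⊕ Fin g) (w : SV g R) :
    symplForm g R (stdBasis g R x) w = symplSign R x * w (σ x.swap) := by
  simp [symplForm_eq_sum, stdBasis_apply_symplIdx]

lemma symplForm_stdBasis_stdBasis (x y : Fin g ⊕ Fin g) :
    symplForm g R (stdBasis g R x) (stdBasis g R y) = if x.swap = y then symplSign R x else 0 := by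
  simp [symplForm_stdBasis_left, stdBasis_apply_symplIdx]

lemma IsSymplBasis.symplForm_elim {A B : Fin g → SV g R} (h : IsSymplBasis g R A B)
    (x y : Fin g ⊕ Fin g) :
    symplForm g R (Sum.elim A B x) (Sum.elim A B y)
      = symplForm g R (stdBasis g R x) (stdBasis g R y) := by
  obtain ⟨-, hAA, hBB, hAB⟩ := h
  rcases x with i | i <;> rcases y with j | j
  · simp [hAA, symplForm_stdBasis_stdBasis]
  · simp [hAB, symplForm_stdBasis_stdBasis, symplSign]
  · simp only [Sum.elim_inr, Sum.elim_inl, symplForm_comm (A j), hAB, symplForm_stdBasis_stdBasis,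
      Sum.swap_inr, Sum.inl.injEq, symplSign]
    split_ifs <;> simp_all
  · simp [hBB, symplForm_stdBasis_stdBasis]

def symplTransvection (u : SV g R) (c : R) : SAut g R :=
  LinearEquiv.transvection (f := c • (symplBilin g R).flip u) (v := u) (by simp [symplForm_self])

lemma symplTransvection_apply (u : SV g R) (c : R) (v : SV g R) :
    symplTransvection u c v = v + (c * symplForm g R v u) • u := rfl

lemma symplTransvection_mem_Sp (u : SV g R) (c : R) : symplTransvection u c ∈ Sp g R := by
  intro v w
  simp only [symplTransvection_apply, symplForm_add_left, symplForm_add_right,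
    symplForm_smul_left, symplForm_smul_right, symplForm_self, symplForm_comm u w]
  ring

lemma exists_mem_Sp_map_of_isUnit {W : Set (SV g R)} {x y : SV g R}
    (hxy : IsUnit (symplForm g R x y)) (hW : ∀ w ∈ W, symplForm g R w x = symplForm g R w y) :
    ∃ M ∈ Sp g R, (∀ w ∈ W, M w = w) ∧ M x = y := by
  refine ⟨symplTransvection (y - x) ↑hxy.unit⁻¹, symplTransvection_mem_Sp _ _,
    fun w hw => ?_, ?_⟩
  · rw [symplTransvection_apply, symplForm_sub_right, hW w hw, sub_self, mul_zero, zero_smul,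
      add_zero]
  · rw [symplTransvection_apply, symplForm_sub_right, symplForm_self, sub_zero,
      IsUnit.val_inv_mul, one_smul, add_sub_cancel]

lemma exists_mem_Sp_map_of_isUnit_of_isUnit {W : Set (SV g R)} {x v y : SV g R}
    (hxv : IsUnit (symplForm g R x v)) (hvy : IsUnit (symplForm g R v y))
    (hWx : ∀ w ∈ W, symplForm g R w x = symplForm g R w v)
    (hWy : ∀ w ∈ W, symplForm g R w v = symplForm g R w y) :
    ∃ M ∈ Sp g R, (∀ w ∈ W, M w = w) ∧ M x = y := by
  obtain ⟨M₁, hM₁, hM₁W, hM₁x⟩ := exists_mem_Sp_map_of_isUnit hxv hWx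
  obtain ⟨M₂, hM₂, hM₂W, hM₂v⟩ := exists_mem_Sp_map_of_isUnit hvy hWy
  refine ⟨M₂ * M₁, mul_mem hM₂ hM₁, fun w hw => ?_, ?_⟩
  · rw [LinearEquiv.mul_apply, hM₁W w hw, hM₂W w hw]
  · rw [LinearEquiv.mul_apply, hM₁x, hM₂v]

lemma stdBasis_image_symplForm_eq {F : Set (Fin g ⊕ Fin g)} {x y : SV g R}
    (h : ∀ q ∈ F, x (σ q.swap) = y (σ q.swap)) :
    ∀ w ∈ stdBasis g R '' F, symplForm g R w x = symplForm g R w y := by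
  rintro _ ⟨q, hq, rfl⟩
  rw [symplForm_stdBasis_left, symplForm_stdBasis_left, h q hq]

lemma map_eq_self_of_stdBasis {F : Set (Fin g ⊕ Fin g)} (L : SV g R →ₗ[R] SV g R)
    (hL : ∀ q ∈ F, L (stdBasis g R q) = stdBasis g R q) {v : SV g R}
    (hv : ∀ m ∉ F, v (σ m) = 0) : L v = v := by
  rw [← (stdBasis g R).sum_repr v, map_sum]
  refine Finset.sum_congr rfl fun x _ => ?_
  by_cases hx : x ∈ F
  · rw [map_smul, hL x hx]
  · rw [show (stdBasis g R).repr v x = v (σ x) by simp [stdBasis], hv x hx, zero_smul, map_zero]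

end SymplecticForm

section Reduction

variable {g : ℕ} {R S : Type} [CommRing R] [CommRing S]

/-- Entrywise application of `f` to the matrix of an automorphism. -/
noncomputable def sautMap (f : R →+* S) : SAut g R →* SAut g S :=
  (LinearMap.GeneralLinearGroup.generalLinearEquiv S _).toMonoidHom.comp <|
    Matrix.GeneralLinearGroup.toLin.toMonoidHom.comp <|
      (Matrix.GeneralLinearGroup.map f).comp <|
        Matrix.GeneralLinearGroup.toLin.symm.toMonoidHom.comp
          (LinearMap.GeneralLinearGroup.generalLinearEquiv R _).symm.toMonoidHom

lemma sautMap_apply_comp (f : R →+* S) (M : SAut g R) (v : SV g R) :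
    sautMap f M (f ∘ v) = f ∘ M v := by
  set A := Matrix.GeneralLinearGroup.toLin.symm
    ((LinearMap.GeneralLinearGroup.generalLinearEquiv R (SV g R)).symm M)
  have hA : (A : Matrix (Fin (2 * g)) (Fin (2 * g)) R).mulVec v = M v := by
    rw [← Matrix.mulVecLin_apply, ← Matrix.GeneralLinearGroup.toLin_apply,
      MulEquiv.apply_symm_apply]
    rfl
  change ((A : Matrix (Fin (2 * g)) (Fin (2 * g)) R).map f).mulVec (f ∘ v) = _
  funext i
  rw [← RingHom.map_mulVec, hA]
  rfl

lemma symplForm_comp (f : R →+* S) (v w : SV g R) :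
    symplForm g S (f ∘ v) (f ∘ w) = f (symplForm g R v w) := by
  simp [symplForm, map_sum]

lemma comp_stdBasis (f : R →+* S) (x : Fin g ⊕ Fin g) :
    f ∘ stdBasis g R x = stdBasis g S x := by
  funext i
  simp [stdBasis_apply, Pi.single_apply, apply_ite f]

lemma sautMap_mem_Sp (f : R →+* S) {M : SAut g R} (hM : M ∈ Sp g R) :
    sautMap f M ∈ Sp g S := by
  rw [mem_Sp_iff_basis (stdBasis g S)]
  intro x y
  simp only [← comp_stdBasis f, sautMap_apply_comp, symplForm_comp, hM _ _]

end Reduction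

section Lifting

variable {g : ℕ}

local notation "σ" => symplIdx g

local notation "ρ" => sautMap (g := g) (Int.castRingHom (ZMod 2))

lemma rMap_stdBasis (x : Fin g ⊕ Fin g) : rMap g (stdBasis g ℤ x) = stdBasis g (ZMod 2) x :=
  comp_stdBasis (Int.castRingHom (ZMod 2)) x

lemma sautMap_rMap (M : SAut g ℤ) (v : SV g ℤ) : ρ M (rMap g v) = rMap g (M v) :=
  sautMap_apply_comp _ M v

variable {F : Set (Fin g ⊕ Fin g)} {p : Fin g ⊕ Fin g} {b : SV g ℤ}

lemma exists_mem_Sp_stdBasis_eq_of_apply_eq_one (hp : p ∉ F)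
    (hF : ∀ q ∈ F, stdBasis g ℤ p (σ q.swap) = b (σ q.swap))
    (hbp' : b (σ p.swap) = 0) (hbp : b (σ p) = 1) :
    ∃ M ∈ Sp g ℤ, (∀ w ∈ stdBasis g ℤ '' F, M w = w) ∧ M (stdBasis g ℤ p) = b := by
  refine exists_mem_Sp_map_of_isUnit_of_isUnit
    (v := stdBasis g ℤ p + stdBasis g ℤ p.swap) ?_ ?_
    (stdBasis_image_symplForm_eq fun q hq => ?_) (stdBasis_image_symplForm_eq fun q hq => ?_)
  · simpa [symplForm_add_right, symplForm_stdBasis_stdBasis, Sum.swap_ne_self]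
      using isUnit_symplSign (R := ℤ) p
  · simpa [symplForm_add_left, symplForm_stdBasis_left, hbp, hbp']
      using isUnit_symplSign (R := ℤ) p.swap
  · simp [stdBasis_apply_symplIdx, Sum.swap_leftInverse.injective.eq_iff,
      ne_of_mem_of_not_mem hq hp]
  · rw [← hF q hq]
    simp [stdBasis_apply_symplIdx, Sum.swap_leftInverse.injective.eq_iff,
      ne_of_mem_of_not_mem hq hp]

lemma exists_mem_Sp_stdBasis_eq_of_apply_eq_one_of_notMem (hp : p ∉ F)
    (hF : ∀ q ∈ F, stdBasis g ℤ p (σ q.swap) = b (σ q.swap))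
    (hbp' : b (σ p.swap) = 0) (hbp : b (σ p) = 0) {m : Fin g ⊕ Fin g} (hmF : m ∉ F)
    (hbm : b (σ m) = 1) :
    ∃ M ∈ Sp g ℤ, (∀ w ∈ stdBasis g ℤ '' F, M w = w) ∧ M (stdBasis g ℤ p) = b := by
  have hmp : m ≠ p := by rintro rfl; rw [hbm] at hbp; exact one_ne_zero hbp
  have hpF : ∀ q ∈ F, q.swap ≠ p := by
    rintro q hq rfl
    have := hF q hq
    rw [stdBasis_apply_symplIdx, if_pos rfl, hbp] at this
    exact one_ne_zero this
  refine exists_mem_Sp_map_of_isUnit_of_isUnit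
    (v := stdBasis g ℤ p.swap + stdBasis g ℤ m.swap) ?_ ?_
    (stdBasis_image_symplForm_eq fun q hq => ?_) (stdBasis_image_symplForm_eq fun q hq => ?_)
  · simpa [symplForm_add_right, symplForm_stdBasis_stdBasis,
      Sum.swap_leftInverse.injective.eq_iff, hmp.symm] using isUnit_symplSign (R := ℤ) p
  · simpa [symplForm_add_left, symplForm_stdBasis_left, hbp, hbm]
      using isUnit_symplSign (R := ℤ) m.swap
  · simp [stdBasis_apply_symplIdx, Sum.swap_leftInverse.injective.eq_iff, hpF q hq,
      ne_of_mem_of_not_mem hq hp, ne_of_mem_of_not_mem hq hmF]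
  · rw [← hF q hq]
    simp [stdBasis_apply_symplIdx, Sum.swap_leftInverse.injective.eq_iff, hpF q hq,
      ne_of_mem_of_not_mem hq hp, ne_of_mem_of_not_mem hq hmF]

lemma exists_mem_Sp_rMap_stdBasis (hp : p ∉ F) {N : SAut g (ZMod 2)} (hN : N ∈ Sp g (ZMod 2))
    (hNF : ∀ q ∈ F, N (stdBasis g (ZMod 2) q) = stdBasis g (ZMod 2) q) :
    ∃ M ∈ Sp g ℤ, (∀ q ∈ F, M (stdBasis g ℤ q) = stdBasis g ℤ q) ∧
      rMap g (M (stdBasis g ℤ p)) = N (stdBasis g (ZMod 2) p) := by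
  set c := N (stdBasis g (ZMod 2) p)
  set b : SV g ℤ := fun i => ((c i).val : ℤ)
  have hb : rMap g b = c := funext fun i => by simp [b, rMap]
  have hb01 : ∀ i, b i = 0 ∨ b i = 1 := fun i => by
    have := ZMod.val_lt (c i); simp only [b]; omega
  have hF : ∀ q ∈ F, stdBasis g ℤ p (σ q.swap) = b (σ q.swap) := by
    intro q hq
    have hmod : symplForm g (ZMod 2) (stdBasis g _ q) (stdBasis g _ p)
        = symplForm g (ZMod 2) (stdBasis g _ q) c := by
      rw [← hN, hNF q hq]
    rw [symplForm_stdBasis_left, symplForm_stdBasis_left,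
      (isUnit_symplSign q).mul_right_inj] at hmod
    simp only [b, ← hmod, stdBasis_apply_symplIdx]
    split_ifs <;> rfl
  suffices ∃ M ∈ Sp g ℤ, (∀ w ∈ stdBasis g ℤ '' F, M w = w) ∧
      M (stdBasis g ℤ p) = b by
    obtain ⟨M, hM, hMF, hMp⟩ := this
    exact ⟨M, hM, fun q hq => hMF _ ⟨q, hq, rfl⟩, by rw [hMp, hb]⟩
  rcases hb01 (σ p.swap) with hbp' | hbp'
  · rcases hb01 (σ p) with hbp | hbp
    · obtain ⟨m, hmF, hbm⟩ : ∃ m ∉ F, b (σ m) = 1 := by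
        by_contra! h
        -- otherwise `c` is supported on `F`, so `N c = c = N e_p`
        have hc : N c = c := map_eq_self_of_stdBasis N.toLinearMap hNF fun m hm => by
          rw [← hb, rMap, (hb01 _).resolve_right (h m hm), Int.cast_zero]
        have := congrFun (N.injective hc) (σ p)
        rw [stdBasis_apply_symplIdx, if_pos rfl, ← hb, rMap, hbp, Int.cast_zero] at this
        exact zero_ne_one this
      exact exists_mem_Sp_stdBasis_eq_of_apply_eq_one_of_notMem hp hF hbp' hbp hmF hbm
    · exact exists_mem_Sp_stdBasis_eq_of_apply_eq_one hp hF hbp' hbp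
  · refine exists_mem_Sp_map_of_isUnit ?_ (stdBasis_image_symplForm_eq hF)
    rw [symplForm_stdBasis_left, hbp', mul_one]
    exact isUnit_symplSign p

lemma exists_mem_Sp_sautMap_eq (U : Finset (Fin g ⊕ Fin g)) :
    ∀ N ∈ Sp g (ZMod 2), (∀ q ∉ U, N (stdBasis g (ZMod 2) q) = stdBasis g (ZMod 2) q) →
      ∃ M ∈ Sp g ℤ, (∀ q ∉ U, M (stdBasis g ℤ q) = stdBasis g ℤ q) ∧ ρ M = N := by
  induction U using Finset.induction_on with
  | empty =>
    intro N _ hN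
    refine ⟨1, one_mem _, fun _ _ => rfl, ?_⟩
    rw [map_one]
    exact (stdBasis g (ZMod 2)).ext' fun q => (hN q (Finset.notMem_empty q)).symm
  | insert p U hpU ih =>
    intro N hN hNU
    obtain ⟨M₁, hM₁, hM₁U, hM₁p⟩ :=
      exists_mem_Sp_rMap_stdBasis (F := {q | q ∉ insert p U}) (p := p) (by simp) hN hNU
    have hρM₁ : ∀ q ∉ insert p U, ρ M₁ (stdBasis g _ q) = stdBasis g _ q := fun q hq => by
      rw [← rMap_stdBasis, sautMap_rMap, hM₁U q hq]
    obtain ⟨M', hM', hM'U, hρM'⟩ := ih ((ρ M₁)⁻¹ * N)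
      (mul_mem (inv_mem (sautMap_mem_Sp _ hM₁)) hN) fun q hq => by
        by_cases hqp : q = p
        · rw [hqp, LinearEquiv.mul_apply, ← hM₁p, ← rMap_stdBasis, ← sautMap_rMap,
            LinearEquiv.coe_inv, LinearEquiv.symm_apply_apply]
        · have hq' : q ∉ insert p U := by simp [hqp, hq]
          rw [LinearEquiv.mul_apply, hNU q hq', ← hρM₁ q hq', LinearEquiv.coe_inv,
            LinearEquiv.symm_apply_apply, hρM₁ q hq']
    refine ⟨M₁ * M', mul_mem hM₁ hM', fun q hq => ?_,
      by rw [map_mul, hρM', mul_inv_cancel_left]⟩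
    rw [LinearEquiv.mul_apply, hM'U q (by simp_all), hM₁U q hq]

lemma exists_mem_Sp_sautMap_eq_of_isSymplBasis {A B : Fin g → SV g ℤ}
    (hAB : IsSymplBasis g ℤ A B) (S : Set (Fin g ⊕ Fin g)) {N : SAut g (ZMod 2)}
    (hN : N ∈ Sp g (ZMod 2))
    (hS : ∀ x ∈ S, N (rMap g (Sum.elim A B x)) = rMap g (Sum.elim A B x)) :
    ∃ M ∈ Sp g ℤ, (∀ x ∈ S, M (Sum.elim A B x) = Sum.elim A B x) ∧ ρ M = N := by
  classical
  obtain ⟨E, hEA, hEB⟩ := hAB.1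
  set T := (stdBasis g ℤ).equiv E (Equiv.refl _)
  have hTe : ∀ x, T (stdBasis g ℤ x) = Sum.elim A B x := by
    rintro (i | i) <;> simp [T, Module.Basis.equiv_apply, hEA, hEB]
  have hT : T ∈ Sp g ℤ := (mem_Sp_iff_basis (stdBasis g ℤ) T).2 fun x y => by
    rw [hTe, hTe, IsSymplBasis.symplForm_elim hAB]
  have hρTe : ∀ x, ρ T (stdBasis g _ x) = rMap g (Sum.elim A B x) := fun x => by
    rw [← rMap_stdBasis, sautMap_rMap, hTe]
  obtain ⟨M', hM', hM'S, hρM'⟩ := exists_mem_Sp_sautMap_eq {x | x ∉ S}.toFinset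
    ((ρ T)⁻¹ * N * ρ T)
    (mul_mem (mul_mem (inv_mem (sautMap_mem_Sp _ hT)) hN) (sautMap_mem_Sp _ hT))
    fun x hx => by
      simp only [Set.mem_toFinset, Set.mem_ofPred_eq, not_not] at hx
      rw [LinearEquiv.mul_apply, LinearEquiv.mul_apply, hρTe, hS x hx, ← hρTe,
        LinearEquiv.coe_inv, LinearEquiv.symm_apply_apply]
  refine ⟨T * M' * T⁻¹, mul_mem (mul_mem hT hM') (inv_mem hT), fun x hx => ?_, ?_⟩
  · rw [LinearEquiv.mul_apply, LinearEquiv.mul_apply, ← hTe, LinearEquiv.coe_inv,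
      LinearEquiv.symm_apply_apply, hM'S x (by simpa using hx)]
  · rw [map_mul, map_mul, hρM', map_inv, mul_assoc, mul_assoc, mul_inv_cancel, mul_one,
      mul_inv_cancel_left]

end Lifting

theorem stabilizer_reduction_surjective_general (g : ℕ) (k l : ℕ)
    (a : Fin k → SV g ℤ) (b : Fin l → SV g ℤ)
    (hab : IsPartialSymplBasis g ℤ a b) :
    ∀ N : SAut g (ZMod 2), N ∈ Sp g (ZMod 2) →
      (∀ i, N (rMap g (a i)) = rMap g (a i)) → (∀ j, N (rMap g (b j)) = rMap g (b j)) →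
      ∃ M : SAut g ℤ, M ∈ Sp g ℤ ∧
        (∀ i, M (a i) = a i) ∧ (∀ j, M (b j) = b j) ∧
        (∀ v, rMap g (M v) = N (rMap g v)) := by
  intro N hN ha hb
  obtain ⟨hk, hl, A, B, hAB, hA, hB⟩ := hab
  obtain ⟨M, hM, hMS, hρM⟩ := exists_mem_Sp_sautMap_eq_of_isSymplBasis hAB
    (Set.range (Sum.inl ∘ Fin.castLE hk) ∪ Set.range (Sum.inr ∘ Fin.castLE hl)) hN
    (by rintro _ (⟨i, rfl⟩ | ⟨j, rfl⟩) <;> simp [hA, hB, ha, hb])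
  refine ⟨M, hM, fun i => ?_, fun j => ?_, fun v => ?_⟩
  · simpa [hA] using hMS _ (Or.inl ⟨i, rfl⟩)
  · simpa [hB] using hMS _ (Or.inr ⟨j, rfl⟩)
  · rw [← sautMap_rMap, hρM]

/-- The reduction map between the stabilizer of a partial symplectic basis of
`ℤ^{2g}` in `Sp_{2g}(ℤ)` and the stabilizer of its mod-2 reduction in `Sp_{2g}(ℤ/2)`
is surjective. -/
theorem stabilizer_reduction_surjective (g : ℕ) (hg : 1 ≤ g) (k l : ℕ)
    (a : Fin k → SV g ℤ) (b : Fin l → SV g ℤ)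
    (hab : IsPartialSymplBasis g ℤ a b) :
    ∀ N : SAut g (ZMod 2), N ∈ Sp g (ZMod 2) →
      (∀ i, N (rMap g (a i)) = rMap g (a i)) → (∀ j, N (rMap g (b j)) = rMap g (b j)) →
      ∃ M : SAut g ℤ, M ∈ Sp g ℤ ∧
        (∀ i, M (a i) = a i) ∧ (∀ j, M (b j) = b j) ∧
        (∀ v, rMap g (M v) = N (rMap g v)) :=
  stabilizer_reduction_surjective_general g k l a b hab
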